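/- Let C be a weakly separated collection in binom([n],k), E ∈ binom([n],k−1), and x ≠ y ∈ [n] with Ex, Ey ∈ C. Let a ∈ (x,y)∖E and suppose J ∈ C satisfies J ∥ Ex, J ∥ Ey, but J is not weakly separated from Ea. Then there exist ℓ, r ∈ J∖E with x ≤_x ℓ <_x r ≤_x y, a ∈ (ℓ,r), (ℓ,r) ∩ (J∖E) = ∅, and (r,ℓ) ∩ (E∖J) ≠ ∅. -/

import Mathlib

def cpos {n : ℕ} (i a : Fin n) : ℕ := ((a - i : Fin n) : ℕ)

def CyclicallyOrdered {n : ℕ} (a b c d : Fin n) : Prop :=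
  0 < cpos a b ∧ cpos a b < cpos a c ∧ cpos a c < cpos a d

instance {n : ℕ} (a b c d : Fin n) : Decidable (CyclicallyOrdered a b c d) := by
  unfold CyclicallyOrdered; infer_instance

def WeaklySeparated {n : ℕ} (I J : Finset (Fin n)) : Prop :=
  ¬ ∃ a b a' b' : Fin n, CyclicallyOrdered a b a' b' ∧
    a ∈ I \ J ∧ a' ∈ I \ J ∧ b ∈ J \ I ∧ b' ∈ J \ I

def cycIco {n : ℕ} (i j : Fin n) : Finset (Fin n) :=
  Finset.univ.filter (fun x => cpos i x < cpos i j)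

def cycIcc {n : ℕ} (i j : Fin n) : Finset (Fin n) :=
  Finset.univ.filter (fun x => cpos i x ≤ cpos i j)

def cycOpen {n : ℕ} (i j : Fin n) : Finset (Fin n) :=
  Finset.univ.filter (fun x => 0 < cpos i x ∧ cpos i x < cpos i j)

def IsGrassmannNecklace {n : ℕ} [NeZero n] (k : ℕ) (I : Fin n → Finset (Fin n)) : Prop :=
  (∀ i, (I i).card = k) ∧ (∀ i, I i \ {i} ⊆ I (i + 1)) ∧ (∀ i, i ∉ I i → I (i + 1) = I i)

def leShift {n : ℕ} (i : Fin n) (A B : Finset (Fin n)) : Prop :=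
  List.Forall₂ (· ≤ ·) ((A.image (fun x => x - i)).sort (· ≤ ·))
    ((B.image (fun x => x - i)).sort (· ≤ ·))

def MemPositroid {n : ℕ} (I : Fin n → Finset (Fin n)) (J : Finset (Fin n)) : Prop :=
  ∀ i, leShift i (I i) J

def IsWSCollection {n : ℕ} (C : Finset (Finset (Fin n))) : Prop :=
  ∀ X ∈ C, ∀ Y ∈ C, WeaklySeparated X Y

def IsMaxWSCollection {n : ℕ} (k : ℕ) (C : Finset (Finset (Fin n))) : Prop :=
  (∀ X ∈ C, X.card = k) ∧ IsWSCollection C ∧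
  ∀ C' : Finset (Finset (Fin n)), C ⊆ C' → (∀ X ∈ C', X.card = k) → IsWSCollection C' → C' = C

/-!
Failure of `J ∥ Ea` is witnessed by `J`-points `w, w'` and `Ea`-points `v, v'` alternating around
the circle. If neither `v` is `a`, the witness shows `J ∦ E`; then `J ∥ Ex` and `J ∥ Ey` force
`{w, w'} = {x, y}`, with points of `E ∖ J` on both arcs between `x` and `y`, and `a ∈ J` would
contradict `J ∥ Ex` or `J ∥ Ey`. Either way `a ∉ J`, and there are `p, p' ∈ J ∖ E` and `q ∈ E ∖ J`
in cyclic order `a, p, q, p'`. Let `r` and `ℓ` be the first and the last point of `J ∖ E` after `a`.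
If `r` came after `y`, then `y ∉ J` and `y, p, q, p'` would contradict `J ∥ Ey`; symmetrically `ℓ`
comes after `x`. Finally `q ∈ (r, ℓ)`.
-/

section CyclicPosition

variable {n : ℕ}

lemma cpos_eq_ite (b v : Fin n) :
    cpos b v = if b.val ≤ v.val then v.val - b.val else v.val + n - b.val := by
  have := b.isLt
  have := v.isLt
  rw [cpos, Fin.sub_def, Fin.val_mk]
  split_ifs
  · rw [show n - b.val + v.val = n + (v.val - b.val) by omega, Nat.add_mod_left,
      Nat.mod_eq_of_lt (by omega)]
  · rw [Nat.mod_eq_of_lt (by omega)]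
    omega

lemma cpos_lt (b v : Fin n) : cpos b v < n := (v - b).isLt

@[simp]
lemma cpos_self (b : Fin n) : cpos b b = 0 := by
  simp [cpos_eq_ite]

lemma cpos_injective (b : Fin n) : Function.Injective (cpos b) := by
  intro u v h
  have := u.isLt
  have := v.isLt
  rw [cpos_eq_ite, cpos_eq_ite] at h
  ext
  split_ifs at h <;> omega

lemma cpos_pos {b u : Fin n} (h : u ≠ b) : 0 < cpos b u :=
  Nat.pos_of_ne_zero fun h0 => h (cpos_injective b (h0.trans (cpos_self b).symm))

lemma cpos_eq_sub_of_le {b w v : Fin n} (h : cpos b w ≤ cpos b v) :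
    cpos w v = cpos b v - cpos b w := by
  have := b.isLt
  have := w.isLt
  have := v.isLt
  rw [cpos_eq_ite, cpos_eq_ite] at h ⊢
  rw [cpos_eq_ite]
  split_ifs at h ⊢ <;> omega

lemma cpos_eq_add_sub_of_lt {b w v : Fin n} (h : cpos b v < cpos b w) :
    cpos w v = cpos b v + n - cpos b w := by
  have := b.isLt
  have := w.isLt
  have := v.isLt
  rw [cpos_eq_ite, cpos_eq_ite] at h ⊢
  rw [cpos_eq_ite]
  split_ifs at h ⊢ <;> omega

lemma mem_cycOpen {i j z : Fin n} : z ∈ cycOpen i j ↔ 0 < cpos i z ∧ cpos i z < cpos i j := by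
  simp [cycOpen]

lemma mem_cycOpen_iff_of_lt (o : Fin n) {l r z : Fin n} (h : cpos o l < cpos o r) :
    z ∈ cycOpen l r ↔ cpos o l < cpos o z ∧ cpos o z < cpos o r := by
  rw [mem_cycOpen, cpos_eq_sub_of_le h.le]
  rcases le_or_gt (cpos o l) (cpos o z) with hz | hz
  · rw [cpos_eq_sub_of_le hz]
    omega
  · rw [cpos_eq_add_sub_of_lt hz]
    have := cpos_lt o r
    omega

lemma mem_cycOpen_iff_of_gt (o : Fin n) {l r z : Fin n} (h : cpos o r < cpos o l) :
    z ∈ cycOpen l r ↔ cpos o z < cpos o r ∨ cpos o l < cpos o z := by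
  rw [mem_cycOpen, cpos_eq_add_sub_of_lt h]
  have := cpos_lt o z
  have := cpos_lt o l
  rcases le_or_gt (cpos o l) (cpos o z) with hz | hz
  · rw [cpos_eq_sub_of_le hz]
    omega
  · rw [cpos_eq_add_sub_of_lt hz]
    omega

lemma cpos_lt_cpos_of_mem_cycOpen {x y a : Fin n} (ha : a ∈ cycOpen x y) :
    cpos a y < cpos a x := by
  rw [mem_cycOpen] at ha
  have hax : cpos a x = 0 + n - cpos x a := by
    rw [← cpos_self x]
    exact cpos_eq_add_sub_of_lt (by simpa using ha.1)
  have := cpos_lt x y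
  rw [hax, cpos_eq_sub_of_le ha.2.le]
  omega

lemma CyclicallyOrdered.of_cpos_lt (o : Fin n) {p q r s : Fin n} (hpq : cpos o p < cpos o q)
    (hqr : cpos o q < cpos o r) (hrs : cpos o r < cpos o s) : CyclicallyOrdered p q r s := by
  have := cpos_eq_sub_of_le hpq.le
  have := cpos_eq_sub_of_le (hpq.trans hqr).le
  have := cpos_eq_sub_of_le (hpq.trans (hqr.trans hrs)).le
  exact ⟨by omega, by omega, by omega⟩

lemma CyclicallyOrdered.rotate {p q r s : Fin n} (h : CyclicallyOrdered p q r s) :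
    CyclicallyOrdered q r s p := by
  obtain ⟨hq, hqr, hrs⟩ := h
  have := cpos_eq_sub_of_le hqr.le
  have := cpos_eq_sub_of_le (hqr.trans hrs).le
  have hqp : cpos q p = 0 + n - cpos p q := by
    rw [← cpos_self p]
    exact cpos_eq_add_sub_of_lt (by simpa using hq)
  have := cpos_lt p s
  exact ⟨by omega, by omega, by omega⟩

end CyclicPosition

section WeakSeparation

variable {n : ℕ}

lemma WeaklySeparated.not_cyclicallyOrdered {I J : Finset (Fin n)} (h : WeaklySeparated I J)
    {p q p' q' : Fin n} (hp : p ∈ I \ J) (hq : q ∈ J \ I) (hp' : p' ∈ I \ J) (hq' : q' ∈ J \ I) :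
    ¬ CyclicallyOrdered p q p' q' :=
  fun hc => h ⟨p, q, p', q', hc, hp, hp', hq, hq'⟩

variable {J E : Finset (Fin n)}

lemma eq_or_eq_of_weaklySeparated_insert {u p q p' q' : Fin n}
    (h : WeaklySeparated J (insert u E)) (hc : CyclicallyOrdered p q p' q')
    (hp : p ∈ J \ E) (hq : q ∈ E \ J) (hp' : p' ∈ J \ E) (hq' : q' ∈ E \ J) :
    u = p ∨ u = p' := by
  by_contra! hu
  simp only [Finset.mem_sdiff] at hp hq hp' hq'
  refine h.not_cyclicallyOrdered ?_ ?_ ?_ ?_ hc <;>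
    simp [Finset.mem_sdiff, *, Ne.symm hu.1, Ne.symm hu.2]

lemma mem_of_weaklySeparated_insert {u p q p' : Fin n}
    (h : WeaklySeparated J (insert u E)) (hu : u ∉ E) (hc : CyclicallyOrdered u p q p')
    (hp : p ∈ J \ E) (hq : q ∈ E \ J) (hp' : p' ∈ J \ E) : u ∈ J := by
  by_contra huJ
  simp only [Finset.mem_sdiff] at hp hq hp'
  refine h.not_cyclicallyOrdered ?_ ?_ ?_ ?_ hc.rotate <;>
    simp [Finset.mem_sdiff, *, ne_of_mem_of_not_mem hp.1 huJ, ne_of_mem_of_not_mem hp'.1 huJ]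

lemma exists_cyclicallyOrdered_of_not_weaklySeparated_insert {a : Fin n}
    (h : ¬ WeaklySeparated J (insert a E)) (hJE : WeaklySeparated J E) (haE : a ∉ E) :
    a ∉ J ∧ ∃ p q p', p ∈ J \ E ∧ q ∈ E \ J ∧ p' ∈ J \ E ∧ CyclicallyOrdered a p q p' := by
  obtain ⟨w, v, w', v', hc, hw, hw', hv, hv'⟩ := not_not.mp h
  simp only [Finset.mem_sdiff, Finset.mem_insert, not_or] at hw hw' hv hv'
  have hvv' : v ≠ v' := by
    rintro rfl
    exact absurd hc.2 (by omega)
  by_cases hva : v = a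
  · subst hva
    have hv'E : v' ∈ E := hv'.1.resolve_left hvv'.symm
    exact ⟨hv.2, w', v', w, by simp [*], by simp [*], by simp [*], hc.rotate⟩
  by_cases hv'a : v' = a
  · subst hv'a
    have hvE : v ∈ E := hv.1.resolve_left hvv'
    exact ⟨hv'.2, w, v, w', by simp [*], by simp [*], by simp [*], hc.rotate.rotate.rotate⟩
  exact absurd hc (hJE.not_cyclicallyOrdered (by simp [*]) (by simp [*, hv.1.resolve_left hva])
    (by simp [*]) (by simp [*, hv'.1.resolve_left hv'a]))

lemma exists_cyclicallyOrdered_of_not_weaklySeparated {x y : Fin n}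
    (h : ¬ WeaklySeparated J E) (hx : WeaklySeparated J (insert x E))
    (hy : WeaklySeparated J (insert y E)) (hxy : x ≠ y) :
    x ∈ J \ E ∧ y ∈ J \ E ∧ ∃ c c', c ∈ E \ J ∧ c' ∈ E \ J ∧ CyclicallyOrdered x c y c' := by
  obtain ⟨w, v, w', v', hc, hw, hw', hv, hv'⟩ := not_not.mp h
  rcases eq_or_eq_of_weaklySeparated_insert hx hc hw hv hw' hv' with rfl | rfl <;>
    rcases eq_or_eq_of_weaklySeparated_insert hy hc hw hv hw' hv' with rfl | rfl
  · exact absurd rfl hxy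
  · exact ⟨hw, hw', v, v', hv, hv', hc⟩
  · exact ⟨hw', hw, v', v, hv', hv, hc.rotate.rotate⟩
  · exact absurd rfl hxy

lemma notMem_of_cyclicallyOrdered_of_mem_cycOpen {x y a c c' : Fin n}
    (hx : WeaklySeparated J (insert x E)) (hy : WeaklySeparated J (insert y E))
    (hxJ : x ∈ J \ E) (hyJ : y ∈ J \ E) (hc : c ∈ E \ J) (hc' : c' ∈ E \ J)
    (hcyc : CyclicallyOrdered x c y c') (ha : a ∈ cycOpen x y) (haE : a ∉ E) : a ∉ J := by
  intro haJ
  rw [mem_cycOpen] at ha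
  have hxy : x ≠ y := by
    rintro rfl
    exact absurd ha.2 (by simp)
  have hay : a ≠ y := by
    rintro rfl
    exact absurd ha.2 (lt_irrefl _)
  have hxa : x ≠ a := by
    rintro rfl
    exact absurd ha.1 (by simp)
  have hca : cpos x c ≠ cpos x a :=
    fun h => haE (cpos_injective x h ▸ (Finset.mem_sdiff.1 hc).1)
  have haJE : a ∈ J \ E := Finset.mem_sdiff.2 ⟨haJ, haE⟩
  rcases hca.lt_or_gt with hca | hac
  · have := eq_or_eq_of_weaklySeparated_insert hy ⟨hcyc.1, hca, ha.2.trans hcyc.2.2⟩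
      hxJ hc haJE hc'
    tauto
  · have := eq_or_eq_of_weaklySeparated_insert hx (.of_cpos_lt x hac hcyc.2.1 hcyc.2.2)
      haJE hc hyJ hc'
    tauto

lemma exists_gap_of_cyclicallyOrdered {x y a p q p' : Fin n}
    (hx : WeaklySeparated J (insert x E)) (hy : WeaklySeparated J (insert y E))
    (hxE : x ∉ E) (hyE : y ∉ E) (ha : a ∈ cycOpen x y) (haJ : a ∉ J)
    (hp : p ∈ J \ E) (hq : q ∈ E \ J) (hp' : p' ∈ J \ E) (hc : CyclicallyOrdered a p q p') :
    ∃ l r : Fin n, l ∈ J \ E ∧ r ∈ J \ E ∧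
      cpos x l < cpos x r ∧ cpos x r ≤ cpos x y ∧
      a ∈ cycOpen l r ∧ (∀ z ∈ cycOpen l r, z ∉ J \ E) ∧
      ∃ z ∈ cycOpen r l, z ∈ E \ J := by
  obtain ⟨l, hl, hlmax⟩ := (J \ E).exists_max_image (cpos a) ⟨p, hp⟩
  obtain ⟨r, hr, hrmin⟩ := (J \ E).exists_min_image (cpos a) ⟨p, hp⟩
  have hry : cpos a r ≤ cpos a y := by
    by_contra! hyr
    have hyJ := mem_of_weaklySeparated_insert hy hyE
      (.of_cpos_lt a (hyr.trans_le (hrmin p hp)) hc.2.1 hc.2.2) hp hq hp'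
    exact absurd (hrmin y (Finset.mem_sdiff.2 ⟨hyJ, hyE⟩)) (not_le.2 hyr)
  have hxl : cpos a x ≤ cpos a l := by
    by_contra! hlx
    have hpqp'x := CyclicallyOrdered.of_cpos_lt a hc.2.1 hc.2.2 ((hlmax p' hp').trans_lt hlx)
    have hxJ := mem_of_weaklySeparated_insert hx hxE hpqp'x.rotate.rotate.rotate hp hq hp'
    exact absurd (hlmax x (Finset.mem_sdiff.2 ⟨hxJ, hxE⟩)) (not_le.2 hlx)
  have hyx := cpos_lt_cpos_of_mem_cycOpen ha
  have hr0 : 0 < cpos a r := cpos_pos (ne_of_mem_of_not_mem (Finset.mem_sdiff.1 hr).1 haJ)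
  have hrl : cpos a r < cpos a l := by omega
  have hxl' := cpos_eq_sub_of_le hxl
  have hxr := cpos_eq_add_sub_of_lt (hry.trans_lt hyx)
  have hxy := cpos_eq_add_sub_of_lt hyx
  have := cpos_lt a l
  refine ⟨l, r, hl, hr, by omega, by omega, (mem_cycOpen_iff_of_gt a hrl).2 (by simp [hr0]),
    fun z hz hzJ => ?_, q, ?_, hq⟩
  · rw [mem_cycOpen_iff_of_gt a hrl] at hz
    have := hlmax z hzJ
    have := hrmin z hzJ
    omega
  · exact (mem_cycOpen_iff_of_lt a hrl).2
      ⟨(hrmin p hp).trans_lt hc.2.1, hc.2.2.trans_le (hlmax p' hp')⟩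

end WeakSeparation

theorem stmt_12_general {n : ℕ} (E : Finset (Fin n))
    (x y : Fin n) (hxy : x ≠ y) (hxE : x ∉ E) (hyE : y ∉ E)
    (a : Fin n) (ha : a ∈ cycOpen x y) (haE : a ∉ E) (J : Finset (Fin n))
    (h1 : WeaklySeparated J (insert x E)) (h2 : WeaklySeparated J (insert y E))
    (h3 : ¬ WeaklySeparated J (insert a E)) :
    ∃ l r : Fin n, l ∈ J \ E ∧ r ∈ J \ E ∧
      cpos x l < cpos x r ∧ cpos x r ≤ cpos x y ∧
      a ∈ cycOpen l r ∧ (∀ z ∈ cycOpen l r, z ∉ J \ E) ∧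
      ∃ z ∈ cycOpen r l, z ∈ E \ J := by
  obtain ⟨haJ, p, q, p', hp, hq, hp', hc⟩ :
      a ∉ J ∧ ∃ p q p', p ∈ J \ E ∧ q ∈ E \ J ∧ p' ∈ J \ E ∧ CyclicallyOrdered a p q p' := by
    by_cases hJE : WeaklySeparated J E
    · exact exists_cyclicallyOrdered_of_not_weaklySeparated_insert h3 hJE haE
    obtain ⟨hxJ, hyJ, c, c', hc, hc', hcyc⟩ :=
      exists_cyclicallyOrdered_of_not_weaklySeparated hJE h1 h2 hxy
    have hxayc' : CyclicallyOrdered x a y c' :=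
      ⟨(mem_cycOpen.1 ha).1, (mem_cycOpen.1 ha).2, hcyc.2.2⟩
    exact ⟨notMem_of_cyclicallyOrdered_of_mem_cycOpen h1 h2 hxJ hyJ hc hc' hcyc ha haE,
      y, c', x, hyJ, hc', hxJ, hxayc'.rotate⟩
  exact exists_gap_of_cyclicallyOrdered h1 h2 hxE hyE ha haJ hp hq hp' hc

/-- Description of a witness: if J ∈ C is weakly separated from Ex and Ey but
not from Ea (a ∈ (x,y)∖E), then there are ℓ, r ∈ J∖E with x ≤_x ℓ <_x r ≤_x y,
a ∈ (ℓ,r), (ℓ,r) ∩ (J∖E) = ∅ and (r,ℓ) ∩ (E∖J) ≠ ∅. -/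
theorem stmt_12 {n k : ℕ} (hk : 1 ≤ k) (C : Finset (Finset (Fin n)))
    (hCk : ∀ X ∈ C, X.card = k) (hC : IsWSCollection C)
    (E : Finset (Fin n)) (hE : E.card = k - 1)
    (x y : Fin n) (hxy : x ≠ y) (hxE : x ∉ E) (hyE : y ∉ E)
    (hEx : insert x E ∈ C) (hEy : insert y E ∈ C)
    (a : Fin n) (ha : a ∈ cycOpen x y) (haE : a ∉ E)
    (J : Finset (Fin n)) (hJ : J ∈ C)
    (h1 : WeaklySeparated J (insert x E)) (h2 : WeaklySeparated J (insert y E))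
    (h3 : ¬ WeaklySeparated J (insert a E)) :
    ∃ l r : Fin n, l ∈ J \ E ∧ r ∈ J \ E ∧
      cpos x l < cpos x r ∧ cpos x r ≤ cpos x y ∧
      a ∈ cycOpen l r ∧ (∀ z ∈ cycOpen l r, z ∉ J \ E) ∧
      ∃ z ∈ cycOpen r l, z ∈ E \ J :=
  stmt_12_general E x y hxy hxE hyE a ha haE J h1 h2 h3
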